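/- arXiv:1910.14448 — 5 statements merged into one kernel-verified Lean document; each statement's English description precedes it below -/
import Mathlib

section
/- Define ĥ : [−μ, μ] → ℝ (for μ > 0 and Λ > 0) by ĥ(x) = Λ(x + μ) for x ∈ [−μ, 0] and ĥ(x) = −Λ(x − μ) for x ∈ [0, μ]. Then for every affine function g(x) = a·x + b, the supremum over x ∈ [−μ, μ] of |ĥ(x) − g(x)| is at least Λμ/2. -/
/-- the hat function `ĥ` on `[-μ, μ]` cannot be approximated by any
affine function `g(x) = a x + b` to sup-error better than `Λ μ / 2`. -/
theorem stmt_1 (μ Λ : ℝ) (hμ : 0 < μ) (hΛ : 0 < Λ)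
    (hhat : ℝ → ℝ)
    (hdef₁ : ∀ x ∈ Set.Icc (-μ) 0, hhat x = Λ * (x + μ))
    (hdef₂ : ∀ x ∈ Set.Icc 0 μ, hhat x = -Λ * (x - μ)) :
    ∀ a b : ℝ,
      Λ * μ / 2 ≤ sSup ((fun x => |hhat x - (a * x + b)|) '' Set.Icc (-μ) μ) := by
  intro a b
  have hμle : -μ ≤ μ := by linarith
  -- values at key points
  have h1 : hhat (-μ) = 0 := by
    have := hdef₁ (-μ) ⟨le_refl _, by linarith⟩; rw [this]; ring
  have h0 : hhat 0 = Λ * μ := by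
    have := hdef₁ 0 ⟨by linarith, le_refl _⟩; rw [this]; ring
  have h2 : hhat μ = 0 := by
    have := hdef₂ μ ⟨by linarith, le_refl _⟩; rw [this]; ring
  -- boundedness of the image
  have hbdd : BddAbove ((fun x => |hhat x - (a * x + b)|) '' Set.Icc (-μ) μ) := by
    refine ⟨Λ * μ + (|a| * μ + |b|), ?_⟩
    rintro y ⟨x, hx, rfl⟩
    have hxabs : |x| ≤ μ := abs_le.mpr ⟨hx.1, hx.2⟩
    have hh : |hhat x| ≤ Λ * μ := by
      rcases le_total x 0 with hx0 | hx0
      · rw [hdef₁ x ⟨hx.1, hx0⟩, abs_of_nonneg (by nlinarith [hx.1])]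
        nlinarith [hx.1]
      · rw [hdef₂ x ⟨hx0, hx.2⟩, abs_of_nonneg (by nlinarith [hx.2])]
        nlinarith [hx.2]
    calc |hhat x - (a * x + b)| ≤ |hhat x| + |a * x + b| := abs_sub _ _
      _ ≤ Λ * μ + (|a| * μ + |b|) := by
          gcongr
          calc |a * x + b| ≤ |a * x| + |b| := abs_add_le _ _
            _ = |a| * |x| + |b| := by rw [abs_mul]
            _ ≤ |a| * μ + |b| := by gcongr
  -- one of the three key points has error ≥ Λμ/2
  have key : Λ * μ / 2 ≤ |hhat (-μ) - (a * (-μ) + b)| ∨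
      Λ * μ / 2 ≤ |hhat 0 - (a * 0 + b)| ∨ Λ * μ / 2 ≤ |hhat μ - (a * μ + b)| := by
    by_contra h
    push_neg at h
    obtain ⟨k1, k0, k2⟩ := h
    rw [h1] at k1; rw [h0] at k0; rw [h2] at k2
    rw [abs_lt] at k1 k0 k2
    nlinarith [k1.1, k1.2, k0.1, k0.2, k2.1, k2.2]
  rcases key with h | h | h
  · exact le_trans h (le_csSup hbdd ⟨-μ, ⟨le_refl _, by linarith⟩, rfl⟩)
  · exact le_trans h (le_csSup hbdd ⟨0, ⟨by linarith, by linarith⟩, rfl⟩)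
  · exact le_trans h (le_csSup hbdd ⟨μ, ⟨hμle, le_refl _⟩, rfl⟩)
end

section
/- Let ĥ be the hat function on [−μ, μ] defined by ĥ(x) = Λ(x+μ) on [−μ,0] and ĥ(x) = −Λ(x−μ) on [0,μ], with μ, Λ > 0. Then the infimum over affine functions g of sup_{x ∈ [−μ,μ]} |ĥ(x) − g(x)| equals exactly Λμ/2, achieved by g(x) = Λμ/2. -/
/-- the best sup-norm approximation error of the hat function `ĥ`
on `[-μ, μ]` by affine functions is exactly `Λ μ / 2`, achieved by the constant
function `g(x) = Λ μ / 2`. -/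
theorem stmt_2 (μ Λ : ℝ) (hμ : 0 < μ) (hΛ : 0 < Λ)
    (hhat : ℝ → ℝ)
    (hdef₁ : ∀ x ∈ Set.Icc (-μ) 0, hhat x = Λ * (x + μ))
    (hdef₂ : ∀ x ∈ Set.Icc 0 μ, hhat x = -Λ * (x - μ)) :
    sInf {e : ℝ | ∃ a b : ℝ,
        e = sSup ((fun x => |hhat x - (a * x + b)|) '' Set.Icc (-μ) μ)}
      = Λ * μ / 2 ∧
    sSup ((fun x => |hhat x - Λ * μ / 2|) '' Set.Icc (-μ) μ) = Λ * μ / 2 := by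
  have h0mem : (0:ℝ) ∈ Set.Icc (-μ) μ := ⟨by linarith, le_of_lt hμ⟩
  have hh0 : hhat 0 = Λ * μ := by
    have := hdef₁ 0 ⟨by linarith, le_refl 0⟩; simpa using this
  have hhm : hhat (-μ) = 0 := by
    have := hdef₁ (-μ) ⟨le_refl _, by linarith⟩; simp [this]
  have hhp : hhat μ = 0 := by
    have := hdef₂ μ ⟨le_of_lt hμ, le_refl μ⟩; simp [this]
  -- bounds on hhat on the interval
  have hbnd : ∀ x ∈ Set.Icc (-μ) μ, 0 ≤ hhat x ∧ hhat x ≤ Λ * μ := by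
    intro x hx
    rcases le_total x 0 with h | h
    · rw [hdef₁ x ⟨hx.1, h⟩]
      constructor <;> nlinarith [hx.1, hx.2]
    · rw [hdef₂ x ⟨h, hx.2⟩]
      constructor <;> nlinarith [hx.1, hx.2]
  -- Part 2
  have part2 : sSup ((fun x => |hhat x - Λ * μ / 2|) '' Set.Icc (-μ) μ) = Λ * μ / 2 := by
    apply le_antisymm
    · apply csSup_le
      · exact ⟨_, Set.mem_image_of_mem _ h0mem⟩
      · rintro y ⟨x, hx, rfl⟩
        obtain ⟨h1, h2⟩ := hbnd x hx
        rw [abs_le]; constructor <;> nlinarith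
    · apply le_csSup
      · refine ⟨Λ * μ / 2, ?_⟩
        rintro y ⟨x, hx, rfl⟩
        obtain ⟨h1, h2⟩ := hbnd x hx
        rw [abs_le]; constructor <;> nlinarith
      · refine ⟨0, h0mem, ?_⟩
        show |hhat 0 - Λ * μ / 2| = Λ * μ / 2
        rw [hh0, abs_of_nonneg (by nlinarith)]
        ring
  refine ⟨?_, part2⟩
  apply le_antisymm
  · apply csInf_le
    · refine ⟨Λ * μ / 2, ?_⟩
      rintro e ⟨a, b, rfl⟩
      -- lower bound for any affine function
      set S := (fun x => |hhat x - (a * x + b)|) '' Set.Icc (-μ) μ with hS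
      have hbdd : BddAbove S := by
        refine ⟨Λ * μ + |a| * μ + |b|, ?_⟩
        rintro y ⟨x, hx, rfl⟩
        obtain ⟨h1, h2⟩ := hbnd x hx
        have hax : |a * x| ≤ |a| * μ := by
          rw [abs_mul]
          have : |x| ≤ μ := abs_le.mpr ⟨hx.1, hx.2⟩
          exact mul_le_mul_of_nonneg_left this (abs_nonneg a)
        calc |hhat x - (a * x + b)| ≤ |hhat x| + |a * x + b| := abs_sub _ _
          _ ≤ |hhat x| + (|a * x| + |b|) := by linarith [abs_add_le (a*x) b]
          _ ≤ Λ * μ + (|a| * μ + |b|) := by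
              have : |hhat x| ≤ Λ * μ := abs_le.mpr ⟨by linarith, h2⟩
              linarith
          _ = Λ * μ + |a| * μ + |b| := by ring
      have e1 : |hhat (-μ) - (a * (-μ) + b)| ≤ sSup S :=
        le_csSup hbdd ⟨-μ, ⟨le_refl _, by linarith⟩, rfl⟩
      have e2 : |hhat 0 - (a * 0 + b)| ≤ sSup S :=
        le_csSup hbdd ⟨0, h0mem, rfl⟩
      have e3 : |hhat μ - (a * μ + b)| ≤ sSup S :=
        le_csSup hbdd ⟨μ, ⟨by linarith, le_refl _⟩, rfl⟩
      rw [hhm] at e1; rw [hh0] at e2; rw [hhp] at e3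
      have a1 := abs_le.mp (le_refl |0 - (a * (-μ) + b)|) |>.1
      have k1 := neg_abs_le (0 - (a * (-μ) + b))
      have k1' := le_abs_self (0 - (a * (-μ) + b))
      have k2 := neg_abs_le (Λ * μ - (a * 0 + b))
      have k2' := le_abs_self (Λ * μ - (a * 0 + b))
      have k3 := neg_abs_le (0 - (a * μ + b))
      have k3' := le_abs_self (0 - (a * μ + b))
      nlinarith [e1, e2, e3]
    · exact ⟨0, Λ * μ / 2, by
        have : (fun x => |hhat x - (0 * x + Λ * μ / 2)|) = fun x => |hhat x - Λ * μ / 2| := by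
          funext x; ring_nf
        rw [this, part2]⟩
  · apply le_csInf
    · exact ⟨_, 0, Λ * μ / 2, rfl⟩
    · rintro e ⟨a, b, rfl⟩
      set S := (fun x => |hhat x - (a * x + b)|) '' Set.Icc (-μ) μ with hS
      have hbdd : BddAbove S := by
        refine ⟨Λ * μ + |a| * μ + |b|, ?_⟩
        rintro y ⟨x, hx, rfl⟩
        obtain ⟨h1, h2⟩ := hbnd x hx
        have hax : |a * x| ≤ |a| * μ := by
          rw [abs_mul]
          have : |x| ≤ μ := abs_le.mpr ⟨hx.1, hx.2⟩
          exact mul_le_mul_of_nonneg_left this (abs_nonneg a)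
        calc |hhat x - (a * x + b)| ≤ |hhat x| + |a * x + b| := abs_sub _ _
          _ ≤ |hhat x| + (|a * x| + |b|) := by linarith [abs_add_le (a*x) b]
          _ ≤ Λ * μ + (|a| * μ + |b|) := by
              have : |hhat x| ≤ Λ * μ := abs_le.mpr ⟨by linarith, h2⟩
              linarith
          _ = Λ * μ + |a| * μ + |b| := by ring
      have e1 : |hhat (-μ) - (a * (-μ) + b)| ≤ sSup S :=
        le_csSup hbdd ⟨-μ, ⟨le_refl _, by linarith⟩, rfl⟩
      have e2 : |hhat 0 - (a * 0 + b)| ≤ sSup S :=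
        le_csSup hbdd ⟨0, h0mem, rfl⟩
      have e3 : |hhat μ - (a * μ + b)| ≤ sSup S :=
        le_csSup hbdd ⟨μ, ⟨by linarith, le_refl _⟩, rfl⟩
      rw [hhm] at e1; rw [hh0] at e2; rw [hhp] at e3
      have k1 := neg_abs_le (0 - (a * (-μ) + b))
      have k1' := le_abs_self (0 - (a * (-μ) + b))
      have k2 := neg_abs_le (Λ * μ - (a * 0 + b))
      have k2' := le_abs_self (Λ * μ - (a * 0 + b))
      have k3 := neg_abs_le (0 - (a * μ + b))
      have k3' := le_abs_self (0 - (a * μ + b))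
      nlinarith [e1, e2, e3]
end

section
/- Let 𝓗 be the class of Λ-Lipschitz functions on an interval S of diameter d, and let 𝓚 be any class of continuous piecewise linear functions on S each having at most (2M)^L linear segments (e.g., functions representable by a ReLU network of depth L with at most M neurons per layer). Then max over f* ∈ 𝓗 of min over f ∈ 𝓚 of sup_{x ∈ S} |f*(x) − f(x)| is at least Λ·d / (4·(2M)^L). -/
/-!
The witness is the sawtooth of slope `Λ` whose teeth have half-width `h = d / (2k)`, `k = (2M)^L`,
so that it vanishes at the `k + 1` points `s + 2hm` and rises to `Λh` at the midpoints between
them. A function with `k` affine pieces has, by pigeonhole, two of those zeros in one piece, hence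
is affine on some `[s + 2hm, s + 2h(m+1)]`. There its second difference vanishes, while that of the
sawtooth is at least `2Λh`, so at one of the three points the error is at least `Λh/2`.
-/

/-- `f` is piecewise linear with at most `k` segments on `[lo, hi]`. -/
def PiecewiseLinearOn (f : ℝ → ℝ) (lo hi : ℝ) (k : ℕ) : Prop :=
  ∃ b : Fin (k + 1) → ℝ, Monotone b ∧ b 0 = lo ∧ b (Fin.last k) = hi ∧
    ∀ j : Fin k, ∃ α β : ℝ,
      ∀ x ∈ Set.Icc (b j.castSucc) (b j.succ), f x = α * x + β

open Set Metric

theorem Monotone.exists_mem_Icc_castSucc_succ {α : Type*} [LinearOrder α] {k : ℕ} (hk : 0 < k)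
    {b : Fin (k + 1) → α} (hb : Monotone b) {x : α} (hx : x ∈ Icc (b 0) (b (Fin.last k))) :
    ∃ j : Fin k, x ∈ Icc (b j.castSucc) (b j.succ) := by
  obtain ⟨i, hi, hmin⟩ := (Finset.univ.filter fun i => x ≤ b i).exists_min_image id
    ⟨Fin.last k, by simpa using hx.2⟩
  simp only [Finset.mem_filter, Finset.mem_univ, true_and, id] at hi hmin
  rcases Fin.eq_zero_or_eq_succ i with rfl | ⟨j, rfl⟩
  · exact ⟨⟨0, hk⟩, hx.1, hi.trans (hb (Fin.zero_le _))⟩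
  · exact ⟨j, not_lt.1 fun h => Fin.castSucc_lt_succ.not_ge (hmin _ h.le), hi⟩

namespace PiecewiseLinearOn

variable {f : ℝ → ℝ} {lo hi : ℝ} {k : ℕ}

theorem exists_abs_le (hf : PiecewiseLinearOn f lo hi k) (hk : 0 < k) :
    ∃ C, ∀ x ∈ Icc lo hi, |f x| ≤ C := by
  obtain ⟨b, hb, rfl, rfl, hpiece⟩ := hf
  choose α β hαβ using hpiece
  set R := max |b 0| |b (Fin.last k)|
  refine ⟨∑ j, (|α j| * R + |β j|), fun x hx => ?_⟩
  obtain ⟨j, hj⟩ := hb.exists_mem_Icc_castSucc_succ hk hx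
  calc |f x| = |α j * x + β j| := by rw [hαβ j x hj]
    _ ≤ |α j| * |x| + |β j| := by rw [← abs_mul]; exact abs_add_le _ _
    _ ≤ |α j| * R + |β j| := by gcongr; exact abs_le_max_abs_abs hx.1 hx.2
    _ ≤ _ := Finset.single_le_sum (f := fun j => |α j| * R + |β j|)
          (fun _ _ => by positivity) (Finset.mem_univ j)

theorem bddAbove_abs_sub (hf : PiecewiseLinearOn f lo hi k) (hk : 0 < k) {g : ℝ → ℝ}
    (hg : ContinuousOn g (Icc lo hi)) :
    BddAbove ((fun x => |g x - f x|) '' Icc lo hi) := by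
  obtain ⟨C₁, hC₁⟩ := isCompact_Icc.exists_bound_of_continuousOn hg
  obtain ⟨C₂, hC₂⟩ := hf.exists_abs_le hk
  refine ⟨C₁ + C₂, ?_⟩
  rintro _ ⟨x, hx, rfl⟩
  exact (abs_sub _ _).trans (add_le_add (hC₁ x hx) (hC₂ x hx))

theorem exists_affine_on_consecutive (hf : PiecewiseLinearOn f lo hi k) (hk : 0 < k)
    {x : Fin (k + 1) → ℝ} (hx : Monotone x) (hlo : lo ≤ x 0) (hhi : x (Fin.last k) ≤ hi) :
    ∃ m : Fin k, ∃ α β : ℝ, ∀ y ∈ Icc (x m.castSucc) (x m.succ), f y = α * y + β := by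
  -- Two of the `k + 1` points lie in one of the `k` pieces, and so does everything between them.
  obtain ⟨b, hb, rfl, rfl, hpiece⟩ := hf
  have hmem (m : Fin (k + 1)) : x m ∈ Icc (b 0) (b (Fin.last k)) :=
    ⟨hlo.trans (hx (Fin.zero_le m)), (hx (Fin.le_last m)).trans hhi⟩
  choose p hp using fun m => hb.exists_mem_Icc_castSucc_succ hk (hmem m)
  have hsame (m₁ m₂ : Fin (k + 1)) (hlt : m₁ < m₂) (heq : p m₁ = p m₂) :
      ∃ m : Fin k, ∃ α β : ℝ,
        ∀ y ∈ Icc (x m.castSucc) (x m.succ), f y = α * y + β := by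
    have hm₁ : (m₁ : ℕ) < k := lt_of_lt_of_le hlt (Fin.le_last m₂)
    obtain ⟨α, β, hαβ⟩ := hpiece (p m₁)
    refine ⟨⟨m₁, hm₁⟩, α, β, fun y hy => hαβ y ⟨(hp m₁).1.trans hy.1, ?_⟩⟩
    calc y ≤ x ⟨m₁ + 1, by omega⟩ := hy.2
      _ ≤ x m₂ := hx (Fin.mk_le_of_le_val hlt)
      _ ≤ b (p m₁).succ := heq ▸ (hp m₂).2
  obtain ⟨m₁, m₂, hne, heq⟩ := Fintype.exists_ne_map_eq_of_card_lt p (by simp)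
  rcases hne.lt_or_gt with hlt | hlt
  · exact hsame m₁ m₂ hlt heq
  · exact hsame m₂ m₁ hlt heq.symm

end PiecewiseLinearOn

theorem exists_quarter_abs_second_diff_le_abs_sub {ι : Type*} {f g : ι → ℝ}
    {x₀ x₁ x₂ : ι} (hf : 2 * f x₁ = f x₀ + f x₂) :
    ∃ x ∈ ({x₀, x₁, x₂} : Set ι),
      |2 * g x₁ - (g x₀ + g x₂)| / 4 ≤ |g x - f x| := by
  set D := 2 * g x₁ - (g x₀ + g x₂)
  by_contra! hsmall
  simp only [mem_insert_iff, mem_singleton_iff, forall_eq_or_imp, forall_eq] at hsmall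
  obtain ⟨⟨h₀, h₀'⟩, ⟨h₁, h₁'⟩, ⟨h₂, h₂'⟩⟩ :=
    hsmall.imp abs_lt.1 (And.imp abs_lt.1 abs_lt.1)
  exact lt_irrefl |D| (abs_lt.2 ⟨by linarith, by linarith⟩)

noncomputable def sawtooth (Λ h s x : ℝ) : ℝ :=
  Λ * infDist x (range fun n : ℤ => s + 2 * h * n)

section Sawtooth

variable {Λ h s : ℝ}

theorem continuous_sawtooth : Continuous (sawtooth Λ h s) :=
  continuous_const.mul (continuous_infDist_pt _)

theorem abs_sawtooth_sub_le (hΛ : 0 ≤ Λ) (x y : ℝ) :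
    |sawtooth Λ h s x - sawtooth Λ h s y| ≤ Λ * |x - y| := by
  have := (lipschitz_infDist_pt (range fun n : ℤ => s + 2 * h * n)).dist_le_mul x y
  rw [NNReal.coe_one, one_mul, Real.dist_eq, Real.dist_eq] at this
  rw [sawtooth, sawtooth, ← mul_sub, abs_mul, abs_of_nonneg hΛ]
  exact mul_le_mul_of_nonneg_left this hΛ

theorem sawtooth_even (n : ℤ) : sawtooth Λ h s (s + 2 * h * n) = 0 := by
  rw [sawtooth, infDist_zero_of_mem (mem_range_self (f := fun n : ℤ => s + 2 * h * n) n),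
    mul_zero]

theorem le_sawtooth_odd (hΛ : 0 ≤ Λ) (hh : 0 ≤ h) (n : ℤ) :
    Λ * h ≤ sawtooth Λ h s (s + 2 * h * n + h) := by
  refine mul_le_mul_of_nonneg_left ((le_infDist (range_nonempty _)).2 ?_) hΛ
  rintro _ ⟨m, rfl⟩
  have hodd : (1 : ℝ) ≤ |((2 * (n - m) + 1 : ℤ) : ℝ)| := by
    exact_mod_cast Int.one_le_abs (by omega)
  rw [Real.dist_eq, show s + 2 * h * n + h - (s + 2 * h * m) = (2 * (n - m) + 1 : ℤ) * h by
    push_cast; ring, abs_mul, abs_of_nonneg hh]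
  exact le_mul_of_one_le_left hh hodd

theorem le_abs_sawtooth_second_diff (hΛ : 0 ≤ Λ) (hh : 0 ≤ h) (n : ℤ) :
    2 * (Λ * h) ≤ |2 * sawtooth Λ h s (s + 2 * h * n + h) -
      (sawtooth Λ h s (s + 2 * h * n) + sawtooth Λ h s (s + 2 * h * n + 2 * h))| := by
  have hnext : s + 2 * h * n + 2 * h = s + 2 * h * (n + 1 : ℤ) := by push_cast; ring
  rw [hnext, sawtooth_even, sawtooth_even, add_zero, sub_zero]
  have hpeak := le_sawtooth_odd (s := s) hΛ hh n
  exact le_trans (by linarith) (le_abs_self _)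

theorem PiecewiseLinearOn.exists_le_abs_sawtooth_sub {Λ h s : ℝ} {k : ℕ} {f : ℝ → ℝ}
    (hf : PiecewiseLinearOn f s (s + 2 * h * k) k) (hk : 0 < k) (hΛ : 0 ≤ Λ) (hh : 0 ≤ h) :
    ∃ x ∈ Icc s (s + 2 * h * k), Λ * h / 2 ≤ |sawtooth Λ h s x - f x| := by
  set grid : Fin (k + 1) → ℝ := fun m => s + 2 * h * ((m : ℕ) : ℤ)
  have hgrid_mem (m : Fin (k + 1)) : grid m ∈ Icc s (s + 2 * h * k) := by
    have hm : ((m : ℕ) : ℝ) ≤ k := by exact_mod_cast Fin.is_le m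
    simp only [grid, Int.cast_natCast, mem_Icc]
    constructor <;> nlinarith
  have hgrid_mono : Monotone grid := fun m₁ m₂ hm => by
    have : ((m₁ : ℕ) : ℝ) ≤ m₂ := by exact_mod_cast hm
    simp only [grid, Int.cast_natCast]
    nlinarith
  obtain ⟨m, α, β, hαβ⟩ :=
    hf.exists_affine_on_consecutive hk hgrid_mono (hgrid_mem 0).1 (hgrid_mem _).2
  set a := grid m.castSucc
  have hsucc : grid m.succ = a + 2 * h := by
    simp only [grid, a, Fin.val_succ, Fin.val_castSucc]; push_cast; ring
  rw [hsucc] at hαβ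
  have hmid : 2 * f (a + h) = f a + f (a + 2 * h) := by
    rw [hαβ a ⟨le_rfl, by linarith⟩, hαβ (a + h) ⟨by linarith, by linarith⟩,
      hαβ (a + 2 * h) ⟨by linarith, le_rfl⟩]
    ring
  obtain ⟨x, hx, herr⟩ :=
    exists_quarter_abs_second_diff_le_abs_sub (g := sawtooth Λ h s) hmid
  have hsecond : 2 * (Λ * h) ≤
      |2 * sawtooth Λ h s (a + h) - (sawtooth Λ h s a + sawtooth Λ h s (a + 2 * h))| :=
    le_abs_sawtooth_second_diff hΛ hh (m : ℕ)
  refine ⟨x, ?_, by linarith⟩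
  have ha := hgrid_mem m.castSucc
  have ha' := hsucc ▸ hgrid_mem m.succ
  rcases hx with rfl | rfl | rfl
  · exact ha
  · exact ⟨by linarith [ha.1], by linarith [ha'.2]⟩
  · exact ha'

theorem stmt_7_general (Λ d s : ℝ) (hΛ : 0 < Λ) (hd : 0 < d)
    (M L : ℕ) (hM : 1 ≤ M) :
    ∃ fstar : ℝ → ℝ,
      (∀ x ∈ Set.Icc s (s + d), ∀ y ∈ Set.Icc s (s + d),
        |fstar x - fstar y| ≤ Λ * |x - y|) ∧
      ∀ f : ℝ → ℝ, PiecewiseLinearOn f s (s + d) ((2 * M) ^ L) →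
        Λ * d / (4 * ((2 * M : ℕ) : ℝ) ^ L) ≤
          sSup ((fun x => |fstar x - f x|) '' Set.Icc s (s + d)) := by
  have hk : 0 < (2 * M) ^ L := by positivity
  set h := d / (2 * ((2 * M : ℕ) : ℝ) ^ L) with h_def
  have hd_eq : d = 2 * h * ((2 * M) ^ L : ℕ) := by rw [h_def]; push_cast; field_simp
  refine ⟨sawtooth Λ h s, fun x _ y _ => abs_sawtooth_sub_le hΛ.le x y, fun f hf => ?_⟩
  obtain ⟨x, hx, herr⟩ := (hd_eq ▸ hf).exists_le_abs_sawtooth_sub hk hΛ.le (by positivity)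
  calc Λ * d / (4 * ((2 * M : ℕ) : ℝ) ^ L) = Λ * h / 2 := by rw [h_def]; field_simp; ring
    _ ≤ |sawtooth Λ h s x - f x| := herr
    _ ≤ _ := le_csSup (hf.bddAbove_abs_sub hk continuous_sawtooth.continuousOn)
      ⟨x, hd_eq ▸ hx, rfl⟩

/-- there is a `Λ`-Lipschitz function `f*` on an interval of
length `d` such that every continuous piecewise linear function with at most
`(2M)^L` segments (e.g. any depth-`L`, width-`M` ReLU network function) is at
sup-distance at least `Λ·d/(4·(2M)^L)` from `f*`. -/
theorem stmt_7 (Λ d s : ℝ) (hΛ : 0 < Λ) (hd : 0 < d)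
    (M L : ℕ) (hM : 1 ≤ M) (hL : 1 ≤ L) :
    ∃ fstar : ℝ → ℝ,
      (∀ x ∈ Set.Icc s (s + d), ∀ y ∈ Set.Icc s (s + d),
        |fstar x - fstar y| ≤ Λ * |x - y|) ∧
      ∀ f : ℝ → ℝ, PiecewiseLinearOn f s (s + d) ((2 * M) ^ L) →
        Λ * d / (4 * ((2 * M : ℕ) : ℝ) ^ L) ≤
          sSup ((fun x => |fstar x - f x|) '' Set.Icc s (s + d)) :=
  stmt_7_general Λ d s hΛ hd M L hM
end Sawtooth
end

section
/- A function f : ℝ → ℝ computed by a feed-forward ReLU neural network with L hidden layers and at most M neurons per hidden layer (affine maps between layers, ReLU activation σ(x) = max(x,0) applied coordinatewise in hidden layers, affine output) is continuous and piecewise linear with at most (2M)^L linear segments. -/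
/-!
On each segment where all neurons of one layer are affine, the pre-activation of each of the
`d ≤ M` neurons of the next layer is affine, so its ReLU has at most one breakpoint there; these
breakpoints cut the segment into at most `d + 1 ≤ 2M` pieces on which the next layer is affine.
Starting from a single segment, `L` hidden layers give at most `(2M)^L` segments, and the affine
output layer adds none.
-/

/-- `f : ℝ → ℝ` is piecewise linear with at most `k` segments: there is a
monotone assignment of segment indices such that `f` is affine (with segment-
dependent coefficients) on each segment. -/
def PLSegments (f : ℝ → ℝ) (k : ℕ) : Prop :=
  ∃ (α β : Fin k → ℝ) (idx : ℝ → Fin k), Monotone idx ∧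
    ∀ x : ℝ, f x = α (idx x) * x + β (idx x)

/-- Forward pass through the hidden layers of a ReLU network:
`hiddenPass dims W b k` computes `σ ∘ A_k ∘ ⋯ ∘ σ ∘ A_1`, where
`A_i x = W i x + b i` is affine and `σ` is the coordinatewise ReLU. -/
def hiddenPass (dims : ℕ → ℕ)
    (W : ∀ i : ℕ, Matrix (Fin (dims (i + 1))) (Fin (dims i)) ℝ)
    (b : ∀ i : ℕ, Fin (dims (i + 1)) → ℝ) :
    ∀ k : ℕ, (Fin (dims 0) → ℝ) → Fin (dims k) → ℝ
  | 0 => fun x => x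
  | k + 1 => fun x i =>
      max (∑ j, W k i j * hiddenPass dims W b k x j + b k i) 0

open Set

def IsAffineOn (g : ℝ → ℝ) (s : Set ℝ) : Prop :=
  ∃ a c : ℝ, EqOn g (fun x => a * x + c) s

namespace IsAffineOn

variable {g : ℝ → ℝ} {s t : Set ℝ}

theorem empty (g : ℝ → ℝ) : IsAffineOn g ∅ :=
  ⟨0, 0, eqOn_empty _ _⟩

theorem mono (h : IsAffineOn g t) (hst : s ⊆ t) : IsAffineOn g s :=
  let ⟨a, c, hac⟩ := h; ⟨a, c, hac.mono hst⟩

theorem congr (h : IsAffineOn g s) {g' : ℝ → ℝ} (hg : EqOn g g' s) : IsAffineOn g' s :=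
  let ⟨a, c, hac⟩ := h; ⟨a, c, hg.symm.trans hac⟩

theorem sum_mul_add {ι : Type*} [Fintype ι] {g : ι → ℝ → ℝ}
    (h : ∀ j, IsAffineOn (g j) s) (w : ι → ℝ) (c : ℝ) :
    IsAffineOn (fun x => ∑ j, w j * g j x + c) s := by
  choose a b hab using h
  refine ⟨∑ j, w j * a j, ∑ j, w j * b j + c, fun x hx => ?_⟩
  simp only [hab _ hx, mul_add, Finset.sum_add_distrib, Finset.sum_mul, mul_assoc]
  ring

end IsAffineOn

theorem exists_relu_affine_split (a c : ℝ) :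
    ∃ t, IsAffineOn (fun x => max (a * x + c) 0) (Iio t) ∧
      IsAffineOn (fun x => max (a * x + c) 0) (Ici t) := by
  rcases lt_trichotomy a 0 with ha | rfl | ha
  · refine ⟨-c / a, ⟨a, c, fun x hx => ?_⟩, ⟨0, 0, fun x hx => ?_⟩⟩
    · have : 0 < a * x + c := by
        have := (lt_div_iff_of_neg ha).1 hx; linarith
      simp [this.le]
    · have : a * x + c ≤ 0 := by
        have := (div_le_iff_of_neg ha).1 hx; linarith
      simp [this]
  · exact ⟨0, ⟨0, max c 0, fun x _ => by simp⟩, ⟨0, max c 0, fun x _ => by simp⟩⟩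
  · refine ⟨-c / a, ⟨0, 0, fun x hx => ?_⟩, ⟨a, c, fun x hx => ?_⟩⟩
    · have : a * x + c ≤ 0 := by
        have := (lt_div_iff₀ ha).1 hx; linarith
      simp [this]
    · have : 0 ≤ a * x + c := by
        have := (div_le_iff₀ ha).1 hx; linarith
      simp [this]

theorem IsAffineOn.exists_relu_split {g : ℝ → ℝ} {s : Set ℝ} (h : IsAffineOn g s) :
    ∃ t, IsAffineOn (fun x => max (g x) 0) (s ∩ Iio t) ∧
      IsAffineOn (fun x => max (g x) 0) (s ∩ Ici t) := by
  obtain ⟨a, c, hac⟩ := h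
  obtain ⟨t, hlt, hge⟩ := exists_relu_affine_split a c
  exact ⟨t, (hlt.mono inter_subset_right).congr fun x hx => by simp [hac hx.1],
    (hge.mono inter_subset_right).congr fun x hx => by simp [hac hx.1]⟩

theorem finProdFinEquiv_le_of_lt_or_eq_le {m n : ℕ} {a a' : Fin m} {b b' : Fin n}
    (h : a < a' ∨ a = a' ∧ b ≤ b') : finProdFinEquiv (a, b) ≤ finProdFinEquiv (a', b') := by
  rw [Fin.le_iff_val_le_val, finProdFinEquiv_apply_val, finProdFinEquiv_apply_val]
  rcases h with h | ⟨rfl, h⟩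
  · have : n * (a + 1) ≤ n * a' := Nat.mul_le_mul_left n h
    have := b.isLt
    grind
  · exact Nat.add_le_add_right h _

/-- The new index of `x` is its old index together with the number of thresholds of its old piece
that `x` has passed, ordered lexicographically. -/
theorem exists_monotone_refinement {k : ℕ} {ι : Type*} [Fintype ι] (idx : ℝ → Fin k)
    (hidx : Monotone idx) (t : Fin k → ι → ℝ) :
    ∃ idx' : ℝ → Fin (k * (Fintype.card ι + 1)), Monotone idx' ∧
      ∀ x y, idx' x = idx' y → idx x = idx y ∧ ∀ i, (t (idx x) i ≤ x ↔ t (idx y) i ≤ y) := by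
  classical
  set passed : ℝ → Finset ι := fun x => Finset.univ.filter fun i => t (idx x) i ≤ x
  have passed_mono : ∀ {x y}, x ≤ y → idx x = idx y → passed x ⊆ passed y := by
    intro x y hxy hidx i
    simp only [passed, Finset.mem_filter, Finset.mem_univ, true_and, hidx]
    exact fun hi => hi.trans hxy
  have passed_lt (x : ℝ) : (passed x).card < Fintype.card ι + 1 :=
    Nat.lt_succ_of_le (Finset.card_le_univ _)
  refine ⟨fun x => finProdFinEquiv (idx x, ⟨(passed x).card, passed_lt x⟩), fun x y hxy => ?_,
    fun x y hxy => ?_⟩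
  · refine finProdFinEquiv_le_of_lt_or_eq_le ((hidx hxy).lt_or_eq.imp_right fun h => ⟨h, ?_⟩)
    exact Finset.card_le_card (passed_mono hxy h)
  · simp only [EmbeddingLike.apply_eq_iff_eq, Prod.mk.injEq, Fin.mk.injEq] at hxy
    obtain ⟨hidx, hcard⟩ := hxy
    have hpassed : passed x = passed y := by
      rcases le_total x y with h | h
      · exact Finset.eq_of_subset_of_card_le (passed_mono h hidx) hcard.ge
      · exact (Finset.eq_of_subset_of_card_le (passed_mono h hidx.symm) hcard.le).symm
    refine ⟨hidx, fun i => ?_⟩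
    simpa [passed] using Finset.ext_iff.1 hpassed i

def IsPiecewiseAffine {ι : Type*} (g : ι → ℝ → ℝ) (k : ℕ) : Prop :=
  ∃ idx : ℝ → Fin k, Monotone idx ∧ ∀ i p, IsAffineOn (g i) (idx ⁻¹' {p})

theorem isPiecewiseAffine_id {ι : Type*} : IsPiecewiseAffine (fun (_ : ι) (x : ℝ) => x) 1 :=
  ⟨fun _ => 0, monotone_const, fun _ _ => ⟨1, 0, fun x _ => by simp⟩⟩

namespace IsPiecewiseAffine

variable {ι : Type*} {g : ι → ℝ → ℝ} {k : ℕ}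

theorem mono (h : IsPiecewiseAffine g k) {k' : ℕ} (hk : k ≤ k') : IsPiecewiseAffine g k' := by
  obtain ⟨idx, hidx, haff⟩ := h
  refine ⟨Fin.castLE hk ∘ idx, fun x y hxy => hidx hxy, fun i q => ?_⟩
  by_cases hq : ∃ p, Fin.castLE hk p = q
  · obtain ⟨p, rfl⟩ := hq
    simpa [preimage, Fin.castLE_inj] using haff i p
  · convert IsAffineOn.empty (g i)
    exact eq_empty_of_forall_notMem fun x hx => hq ⟨idx x, hx⟩

theorem relu_layer [Fintype ι] {κ : Type*} [Fintype κ] (h : IsPiecewiseAffine g k)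
    (W : Matrix κ ι ℝ) (c : κ → ℝ) :
    IsPiecewiseAffine (fun i x => max (∑ j, W i j * g j x + c i) 0)
      (k * (Fintype.card κ + 1)) := by
  obtain ⟨idx, hidx, haff⟩ := h
  choose t ht using fun p i =>
    (IsAffineOn.sum_mul_add (fun j => haff j p) (W i) (c i)).exists_relu_split
  obtain ⟨idx', hidx', hfiber⟩ := exists_monotone_refinement idx hidx t
  refine ⟨idx', hidx', fun i q => ?_⟩
  rcases (idx' ⁻¹' {q}).eq_empty_or_nonempty with hempty | ⟨x₀, hx₀⟩
  · rw [hempty]; exact IsAffineOn.empty _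
  have hsame : ∀ y ∈ idx' ⁻¹' {q}, idx y = idx x₀ ∧ (t (idx x₀) i ≤ y ↔ t (idx x₀) i ≤ x₀) := by
    intro y hy
    obtain ⟨hidx, hside⟩ := hfiber y x₀ (hy.trans hx₀.symm)
    exact ⟨hidx, hidx ▸ hside i⟩
  by_cases hx₀t : t (idx x₀) i ≤ x₀
  · exact (ht (idx x₀) i).2.mono fun y hy => ⟨(hsame y hy).1, (hsame y hy).2.2 hx₀t⟩
  · exact (ht (idx x₀) i).1.mono fun y hy =>
      ⟨(hsame y hy).1, not_le.1 fun h => hx₀t ((hsame y hy).2.1 h)⟩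

theorem plSegments_sum_mul_add [Fintype ι] (h : IsPiecewiseAffine g k) (w : ι → ℝ)
    (c : ℝ) : PLSegments (fun x => ∑ j, w j * g j x + c) k := by
  obtain ⟨idx, hidx, haff⟩ := h
  choose α β hαβ using fun p => IsAffineOn.sum_mul_add (fun j => haff j p) w c
  exact ⟨α, β, idx, hidx, fun x => hαβ (idx x) rfl⟩

end IsPiecewiseAffine

section hiddenPass

variable (dims : ℕ → ℕ) (W : ∀ i : ℕ, Matrix (Fin (dims (i + 1))) (Fin (dims i)) ℝ)
  (b : ∀ i : ℕ, Fin (dims (i + 1)) → ℝ)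

theorem continuous_hiddenPass (n : ℕ) : Continuous (hiddenPass dims W b n) := by
  induction n with
  | zero => exact continuous_id
  | succ n ih =>
    simp only [hiddenPass]
    fun_prop

theorem isPiecewiseAffine_hiddenPass (M : ℕ) (hM : 1 ≤ M) (n : ℕ)
    (hdims : ∀ i, 1 ≤ i → i ≤ n → dims i ≤ M) :
    IsPiecewiseAffine (fun j x => hiddenPass dims W b n (fun _ => x) j) ((2 * M) ^ n) := by
  induction n with
  | zero => exact isPiecewiseAffine_id
  | succ n ih =>
    refine ((ih fun i hi hin => hdims i hi (by omega)).relu_layer (W n) (b n)).mono ?_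
    rw [Fintype.card_fin, pow_succ]
    exact Nat.mul_le_mul_left _ (by linarith [hdims (n + 1) (by omega) le_rfl])

end hiddenPass

theorem stmt_9_general (L M : ℕ) (hM : 1 ≤ M)
    (dims : ℕ → ℕ)
    (hdimsM : ∀ i : ℕ, 1 ≤ i → i ≤ L → dims i ≤ M)
    (W : ∀ i : ℕ, Matrix (Fin (dims (i + 1))) (Fin (dims i)) ℝ)
    (b : ∀ i : ℕ, Fin (dims (i + 1)) → ℝ)
    (wout : Fin (dims L) → ℝ) (cout : ℝ)
    (f : ℝ → ℝ)
    (hf : ∀ x : ℝ,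
      f x = ∑ j, wout j * hiddenPass dims W b L (fun _ => x) j + cout) :
    Continuous f ∧ PLSegments f ((2 * M) ^ L) := by
  rw [funext hf]
  refine ⟨?_, (isPiecewiseAffine_hiddenPass dims W b M hM L hdimsM).plSegments_sum_mul_add
    wout cout⟩
  have := continuous_hiddenPass dims W b L
  fun_prop

/-- a scalar function computed by a feed-forward ReLU network
with `L` hidden layers of width at most `M` (affine maps between layers,
ReLU in the hidden layers, affine output) is continuous and piecewise linear
with at most `(2M)^L` segments. -/
theorem stmt_9 (L M : ℕ) (hM : 1 ≤ M)
    (dims : ℕ → ℕ) (hdims0 : dims 0 = 1)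
    (hdimsM : ∀ i : ℕ, 1 ≤ i → i ≤ L → dims i ≤ M)
    (W : ∀ i : ℕ, Matrix (Fin (dims (i + 1))) (Fin (dims i)) ℝ)
    (b : ∀ i : ℕ, Fin (dims (i + 1)) → ℝ)
    (wout : Fin (dims L) → ℝ) (cout : ℝ)
    (f : ℝ → ℝ)
    (hf : ∀ x : ℝ,
      f x = ∑ j, wout j * hiddenPass dims W b L (fun _ => x) j + cout) :
    Continuous f ∧ PLSegments f ((2 * M) ^ L) :=
  stmt_9_general L M hM dims hdimsM W b wout cout f hf
end

section
/- The composition of a piecewise linear function g : ℝ → ℝ with at most p segments and a piecewise linear function h : ℝ → ℝ with at most q segments is piecewise linear with at most p·q segments. -/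
/-- the composition of a piecewise linear function `g` with at
most `p` segments and a piecewise linear function `h` with at most `q`
segments is piecewise linear with at most `p·q` segments. -/
theorem stmt_10 (g h : ℝ → ℝ) (p q : ℕ)
    (hg : PLSegments g p) (hh : PLSegments h q) :
    PLSegments (h ∘ g) (p * q) := by
  obtain ⟨α₁, β₁, i₁, hi₁, hgx⟩ := hg
  obtain ⟨α₂, β₂, i₂, hi₂, hhx⟩ := hh
  have hp : 0 < p := (i₁ 0).pos
  have hq : 0 < q := (i₂ 0).pos
  -- natural-number secondary index
  set J : ℝ → ℕ := fun x =>
    if 0 ≤ α₁ (i₁ x) then (i₂ (g x)).val else q - 1 - (i₂ (g x)).val with hJdef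
  have hJ : ∀ x, J x < q := by
    intro x
    have h2 := (i₂ (g x)).isLt
    simp only [hJdef]
    split <;> omega
  -- combined index
  have hbound : ∀ x : ℝ, (i₁ x).val * q + J x < p * q := by
    intro x
    calc (i₁ x).val * q + J x < (i₁ x).val * q + q := Nat.add_lt_add_left (hJ x) _
      _ = ((i₁ x).val + 1) * q := (Nat.succ_mul _ _).symm
      _ ≤ p * q := Nat.mul_le_mul_right q (Nat.succ_le_of_lt (i₁ x).isLt)
  set idx : ℝ → Fin (p * q) := fun x => ⟨(i₁ x).val * q + J x, hbound x⟩ with hidxdef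
  -- decoders
  have hdiv : ∀ k : Fin (p * q), k.val / q < p := fun k =>
    Nat.div_lt_of_lt_mul (lt_of_lt_of_eq k.isLt (Nat.mul_comm p q))
  have hmod : ∀ k : Fin (p * q), k.val % q < q := fun k => Nat.mod_lt _ hq
  set dec1 : Fin (p * q) → Fin p := fun k => ⟨k.val / q, hdiv k⟩ with hdec1
  set dec2 : Fin (p * q) → Fin q := fun k =>
    if 0 ≤ α₁ (dec1 k) then ⟨k.val % q, hmod k⟩
    else ⟨q - 1 - k.val % q, by omega⟩ with hdec2
  have hdec1x : ∀ x : ℝ, dec1 (idx x) = i₁ x := by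
    intro x
    apply Fin.ext
    simp only [hdec1, hidxdef]
    rw [Nat.add_comm, Nat.add_mul_div_right _ _ hq, Nat.div_eq_of_lt (hJ x)]
    simp
  have hmodx : ∀ x : ℝ, (idx x).val % q = J x := by
    intro x
    simp only [hidxdef]
    rw [Nat.add_comm, Nat.add_mul_mod_self_right, Nat.mod_eq_of_lt (hJ x)]
  have hdec2x : ∀ x : ℝ, dec2 (idx x) = i₂ (g x) := by
    intro x
    have hj := (i₂ (g x)).isLt
    apply Fin.ext
    simp only [hdec2, hdec1x x]
    simp only [hidxdef, hJdef]
    split_ifs with hs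
    · show ((i₁ x).val * q + (i₂ (g x)).val) % q = _
      rw [Nat.add_comm, Nat.add_mul_mod_self_right, Nat.mod_eq_of_lt hj]
    · show q - 1 - ((i₁ x).val * q + (q - 1 - (i₂ (g x)).val)) % q = _
      rw [Nat.add_comm, Nat.add_mul_mod_self_right, Nat.mod_eq_of_lt (by omega)]
      omega
  refine ⟨fun k => α₂ (dec2 k) * α₁ (dec1 k),
    fun k => α₂ (dec2 k) * β₁ (dec1 k) + β₂ (dec2 k), idx, ?_, ?_⟩
  · intro x y hxy
    have h1 : i₁ x ≤ i₁ y := hi₁ hxy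
    rcases lt_or_eq_of_le h1 with hlt | heq
    · show (idx x).val ≤ (idx y).val
      simp only [hidxdef]
      have : ((i₁ x).val + 1) * q ≤ (i₁ y).val * q :=
        Nat.mul_le_mul_right q (Nat.succ_le_of_lt hlt)
      have hJx := hJ x
      calc (i₁ x).val * q + J x ≤ (i₁ x).val * q + q := by omega
        _ = ((i₁ x).val + 1) * q := (Nat.succ_mul _ _).symm
        _ ≤ (i₁ y).val * q := this
        _ ≤ (i₁ y).val * q + J y := Nat.le_add_right _ _
    · show (idx x).val ≤ (idx y).val
      simp only [hidxdef, heq]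
      have hJle : J x ≤ J y := by
        have hgxe := hgx x
        have hgye := hgx y
        rw [heq] at hgxe
        by_cases hs : 0 ≤ α₁ (i₁ y)
        · have : g x ≤ g y := by
            rw [hgxe, hgye]
            have := mul_le_mul_of_nonneg_left hxy hs
            linarith
          have := hi₂ this
          simp only [hJdef, heq, if_pos hs]
          exact this
        · have : g y ≤ g x := by
            rw [hgxe, hgye]
            push_neg at hs
            nlinarith
          have hle : (i₂ (g y)).val ≤ (i₂ (g x)).val := hi₂ this
          have hjx := (i₂ (g x)).isLt
          simp only [hJdef, heq, if_neg hs]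
          omega
      omega
  · intro x
    simp only [Function.comp_apply, hdec1x x, hdec2x x]
    rw [hhx (g x), hgx x]
    ring
end
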